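/- arXiv:2512.20682 — 4 statements merged into one kernel-verified Lean document; each statement's English description precedes it below -/
import Mathlib

section
/- Let f : ℝ → ℝ be convex, a < b, g_a := max ∂f(a) < 0 < min ∂f(b) =: g_b, and let ξ be the intersection of the two supporting lines. If ξ is not a global minimizer of f, then f(a) + g_a(ξ - a) < f(ξ); i.e., the point (ξ, f(ξ)) lies strictly above both supporting lines. -/
def SubdifferentialAt (f : ℝ → ℝ) (a : ℝ) : Set ℝ :=
  {g : ℝ | ∀ x : ℝ, f a + g * (x - a) ≤ f x}

/-!
If the supporting line at `a` met the graph at `ξ`, then so would the one at `b`, since both lines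
meet at `ξ`. A supporting line touching the graph at `ξ` supports it there, so `ga` and `gb` would
be subgradients at `ξ`; the subdifferential is an interval, hence it would contain `0 ∈ [ga, gb]`.
-/

theorem convex_subdifferentialAt (f : ℝ → ℝ) (a : ℝ) : Convex ℝ (SubdifferentialAt f a) := by
  intro g₁ h₁ g₂ h₂ s t hs ht hst x
  have hs₁ := mul_le_mul_of_nonneg_left (h₁ x) hs
  have ht₂ := mul_le_mul_of_nonneg_left (h₂ x) ht
  calc f a + (s • g₁ + t • g₂) * (x - a)
      = s * (f a + g₁ * (x - a)) + t * (f a + g₂ * (x - a)) := by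
        simp only [smul_eq_mul]; linear_combination (-f a) * hst
    _ ≤ s * f x + t * f x := add_le_add hs₁ ht₂
    _ = f x := by rw [← add_mul, hst, one_mul]

theorem mem_subdifferentialAt_of_touch {f : ℝ → ℝ} {a ξ g : ℝ} (hg : g ∈ SubdifferentialAt f a)
    (htouch : f a + g * (ξ - a) = f ξ) : g ∈ SubdifferentialAt f ξ := by
  intro x
  calc f ξ + g * (x - ξ) = f a + g * (x - a) := by rw [← htouch]; ring
    _ ≤ f x := hg x

theorem stmt_4_general (f : ℝ → ℝ)
    (a b ga gb ξ : ℝ)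
    (hga : IsGreatest (SubdifferentialAt f a) ga)
    (hgb : IsLeast (SubdifferentialAt f b) gb)
    (hga0 : ga < 0) (hgb0 : 0 < gb)
    (hξ : f a + ga * (ξ - a) = f b + gb * (ξ - b))
    (h0 : 0 ∉ SubdifferentialAt f ξ) :
    f a + ga * (ξ - a) < f ξ ∧ f b + gb * (ξ - b) < f ξ := by
  suffices hlt : f a + ga * (ξ - a) < f ξ from ⟨hlt, hξ ▸ hlt⟩
  refine (hga.1 ξ).lt_of_ne fun htouch => h0 ?_
  have hga_ξ := mem_subdifferentialAt_of_touch hga.1 htouch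
  have hgb_ξ := mem_subdifferentialAt_of_touch hgb.1 (hξ ▸ htouch)
  exact (convex_subdifferentialAt f ξ).ordConnected.out hga_ξ hgb_ξ
    ⟨hga0.le, hgb0.le⟩

theorem stmt_4 (f : ℝ → ℝ) (hf : ConvexOn ℝ Set.univ f)
    (a b ga gb ξ : ℝ) (hab : a < b)
    (hga : IsGreatest (SubdifferentialAt f a) ga)
    (hgb : IsLeast (SubdifferentialAt f b) gb)
    (hga0 : ga < 0) (hgb0 : 0 < gb)
    (hξ : f a + ga * (ξ - a) = f b + gb * (ξ - b))
    (h0 : 0 ∉ SubdifferentialAt f ξ) :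
    f a + ga * (ξ - a) < f ξ ∧ f b + gb * (ξ - b) < f ξ :=
  stmt_4_general f a b ga gb ξ hga hgb hga0 hgb0 hξ h0
end

section
/- Let f : ℝ → ℝ be given as f(x) = max over a finite index set I of affine functions f_i(x) = s_i x + c_i, with a < b, g_a := max ∂f(a) < 0 < min ∂f(b) =: g_b, and let ξ be the intersection of the supporting lines at a and b. Then either 0 ∈ ∂f(ξ), or f(ξ) = max_{i ∈ I \ A} f_i(ξ), where A := {i : f_i(a) = f(a)} ∪ {i : f_i(b) = f(b)}. -/
section Subdifferential

variable {f : ℝ → ℝ} {a b g g₁ g₂ ξ : ℝ}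

theorem ordConnected_subdifferentialAt (f : ℝ → ℝ) (a : ℝ) :
    (SubdifferentialAt f a).OrdConnected := by
  refine ⟨fun g₁ hg₁ g₂ hg₂ g hg x => ?_⟩
  rcases le_total x a with hx | hx
  · nlinarith [hg₁ x, hg.1]
  · nlinarith [hg₂ x, hg.2]

theorem mem_subdifferentialAt_of_eq (hg : g ∈ SubdifferentialAt f a)
    (hξ : f ξ = f a + g * (ξ - a)) : g ∈ SubdifferentialAt f ξ := fun x => by
  linarith [hg x]

theorem mem_subdifferentialAt_of_affine_le {s c : ℝ} (hle : ∀ x, s * x + c ≤ f x)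
    (ha : s * a + c = f a) : s ∈ SubdifferentialAt f a := fun x => by
  linarith [hle x]

theorem mem_Icc_of_supportingLines_eq (hg₁ : g₁ ∈ SubdifferentialAt f a)
    (hg₂ : g₂ ∈ SubdifferentialAt f b) (hlt : g₁ < g₂)
    (hξ : f a + g₁ * (ξ - a) = f b + g₂ * (ξ - b)) : ξ ∈ Set.Icc a b :=
  ⟨by nlinarith [hg₂ a], by nlinarith [hg₁ b]⟩

theorem affine_le_supportingLine_of_isGreatest {s c : ℝ} (hle : ∀ x, s * x + c ≤ f x)
    (ha : s * a + c = f a) (hg : IsGreatest (SubdifferentialAt f a) g) (hx : a ≤ ξ) :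
    s * ξ + c ≤ f a + g * (ξ - a) := by
  have hs : s ≤ g := hg.2 (mem_subdifferentialAt_of_affine_le hle ha)
  nlinarith [mul_le_mul_of_nonneg_right hs (sub_nonneg.2 hx)]

theorem affine_le_supportingLine_of_isLeast {s c : ℝ} (hle : ∀ x, s * x + c ≤ f x)
    (hb : s * b + c = f b) (hg : IsLeast (SubdifferentialAt f b) g) (hx : ξ ≤ b) :
    s * ξ + c ≤ f b + g * (ξ - b) := by
  have hs : g ≤ s := hg.2 (mem_subdifferentialAt_of_affine_le hle hb)
  nlinarith [mul_le_mul_of_nonneg_right hs (sub_nonneg.2 hx)]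

end Subdifferential

theorem stmt_5_general {ι : Type*} [Fintype ι] [Nonempty ι]
    (s c : ι → ℝ) (f : ℝ → ℝ)
    (hfdef : ∀ x : ℝ, f x = Finset.univ.sup' Finset.univ_nonempty (fun i => s i * x + c i))
    (a b ga gb ξ : ℝ)
    (hga : IsGreatest (SubdifferentialAt f a) ga)
    (hgb : IsLeast (SubdifferentialAt f b) gb)
    (hga0 : ga < 0) (hgb0 : 0 < gb)
    (hξ : f a + ga * (ξ - a) = f b + gb * (ξ - b)) :
    0 ∈ SubdifferentialAt f ξ ∨
      ∃ i ∉ ({i | s i * a + c i = f a} ∪ {i | s i * b + c i = f b} : Set ι),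
        s i * ξ + c i = f ξ := by
  have hle : ∀ i x, s i * x + c i ≤ f x := fun i x => by
    rw [hfdef]; exact Finset.le_sup' (fun i => s i * x + c i) (Finset.mem_univ i)
  obtain ⟨haξ, hξb⟩ := mem_Icc_of_supportingLines_eq hga.1 hgb.1 (hga0.trans hgb0) hξ
  rcases (hga.1 ξ).eq_or_lt with hfξ | hfξ
  · left
    exact (ordConnected_subdifferentialAt f ξ).out
      (mem_subdifferentialAt_of_eq hga.1 hfξ.symm)
      (mem_subdifferentialAt_of_eq hgb.1 (hξ ▸ hfξ.symm)) ⟨hga0.le, hgb0.le⟩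
  · right
    obtain ⟨i, -, hi⟩ := Finset.exists_mem_eq_sup' Finset.univ_nonempty (fun i => s i * ξ + c i)
    have hiξ : s i * ξ + c i = f ξ := by rw [hfdef ξ, hi]
    refine ⟨i, ?_, hiξ⟩
    rintro (hia | hib)
    · linarith [affine_le_supportingLine_of_isGreatest (hle i) hia hga haξ]
    · linarith [affine_le_supportingLine_of_isLeast (hle i) hib hgb hξb]

theorem stmt_5 {ι : Type*} [Fintype ι] [Nonempty ι]
    (s c : ι → ℝ) (f : ℝ → ℝ)
    (hfdef : ∀ x : ℝ, f x = Finset.univ.sup' Finset.univ_nonempty (fun i => s i * x + c i))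
    (a b ga gb ξ : ℝ) (hab : a < b)
    (hga : IsGreatest (SubdifferentialAt f a) ga)
    (hgb : IsLeast (SubdifferentialAt f b) gb)
    (hga0 : ga < 0) (hgb0 : 0 < gb)
    (hξ : f a + ga * (ξ - a) = f b + gb * (ξ - b)) :
    0 ∈ SubdifferentialAt f ξ ∨
      ∃ i ∉ ({i | s i * a + c i = f a} ∪ {i | s i * b + c i = f b} : Set ι),
        s i * ξ + c i = f ξ :=
  stmt_5_general s c f hfdef a b ga gb ξ hga hgb hga0 hgb0 hξ
end

section
/- Outside the finitely many points where two of the dual lines t_i(m) = y_i - m x_i intersect, the function J(m) = min_t Σ_i |m x_i + t - y_i| is differentiable with derivative J'(m) = Σ_{i ∈ I_+} x_i − Σ_{i ∈ I_−} x_i, where I_± = {i : m x_i + t*(m) − y_i ≷ 0} and t*(m) is the (locally unique) median of {y_i − m x_i}. -/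
/-!
Write `a_i = y_i - m x_i` and `F(t) = ∑ |t - a_i|`. Comparing `F(t ± h)` with `F(t)` for small `h`
shows that at a minimiser `t` the sign sum `∑ sign (t - a_i) = #{a_i < t} - #{a_i > t}` is at most
`#{a_i = t}` in absolute value; with distinct `a_i` and `N` odd this forces `t = a_k` for some `k`
and a vanishing sign sum. Conversely a vanishing sign sum makes `t` a minimiser, since
`sign (t - a_i) * (s - a_i) ≤ |s - a_i|`. Near `m` the lines do not cross line `k`, so the signs
`σ_i = sign (a_k - a_i)` are frozen, `a_k(m')` remains a median, and
`J(m') = ∑ σ_i (a_k(m') - a_i(m'))` is affine with slope `∑ σ_i (x_i - x_k) = ∑ σ_i x_i`.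
-/

open Finset Filter Topology

lemma sign_mul_le_abs (u v : ℝ) : (SignType.sign u : ℝ) * v ≤ |v| := by
  rcases lt_trichotomy u 0 with hu | rfl | hu <;> simp [*, neg_le_abs, le_abs_self]

lemma abs_add_eq_of_abs_lt {u h : ℝ} (hh : |h| < |u|) : |u + h| = |u| + SignType.sign u * h := by
  rcases lt_trichotomy u 0 with hu | rfl | hu
  · rw [abs_of_neg hu] at hh ⊢
    rw [abs_of_neg (by linarith [le_abs_self h]), sign_neg hu, SignType.coe_neg_one]
    ring
  · exact absurd hh (by simp)
  · rw [abs_of_pos hu] at hh ⊢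
    rw [abs_of_pos (by linarith [neg_abs_le h]), sign_pos hu, SignType.coe_one]
    ring

lemma eventually_sign_eq_of_ne_zero {X : Type*} [TopologicalSpace X] {f : X → ℝ} {p : X}
    (hf : ContinuousAt f p) (hp : f p ≠ 0) :
    ∀ᶠ q in 𝓝 p, SignType.sign (f q) = SignType.sign (f p) := by
  have hsign := (continuousAt_sign_of_ne_zero hp).comp hf
  rw [ContinuousAt, nhds_discrete SignType] at hsign
  exact tendsto_pure.1 hsign

lemma sum_filter_pos_sub_sum_filter_neg {ι : Type*} [Fintype ι] (z w : ι → ℝ) :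
    ∑ i ∈ {i | 0 < z i}, w i - ∑ i ∈ {i | z i < 0}, w i = ∑ i, SignType.sign (z i) * w i := by
  rw [sum_filter, sum_filter, ← sum_sub_distrib]
  refine sum_congr rfl fun i _ => ?_
  rcases lt_trichotomy (z i) 0 with h | h | h <;> simp [h, h.not_gt]

section SumAbsSub

variable {ι : Type*} [Fintype ι] (a : ι → ℝ)

lemma sum_sign_sub_eq_card_sub_card (t : ℝ) :
    ∑ i, (SignType.sign (t - a i) : ℝ) = #{i | a i < t} - #{i | t < a i} := by
  rw [natCast_card_filter, natCast_card_filter, ← sum_sub_distrib]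
  refine sum_congr rfl fun i _ => ?_
  rcases lt_trichotomy (a i) t with h | h | h <;> simp [h, h.not_gt]

lemma card_lt_add_card_gt_add_card_eq (t : ℝ) :
    #{i | a i < t} + #{i | t < a i} + #{i | a i = t} = Fintype.card ι := by
  rw [card_filter, card_filter, card_filter, ← sum_add_distrib, ← sum_add_distrib,
    ← card_univ, card_eq_sum_ones]
  refine sum_congr rfl fun i _ => ?_
  rcases lt_trichotomy (a i) t with h | h | h
  · simp [h, h.not_gt, h.ne]
  · simp [h]
  · simp [h, h.not_gt, h.ne']

lemma sum_abs_add_sub_eq {t h : ℝ} (hh : ∀ i, a i ≠ t → |h| < |t - a i|) :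
    ∑ i, |t + h - a i| =
      ∑ i, |t - a i| + h * ∑ i, (SignType.sign (t - a i) : ℝ) + |h| * #{i | a i = t} := by
  have hterm : ∀ i ∈ univ, |t + h - a i| =
      |t - a i| + h * SignType.sign (t - a i) + |h| * if a i = t then 1 else 0 := by
    intro i _
    by_cases hi : a i = t
    · simp [hi]
    · rw [show t + h - a i = t - a i + h by ring, abs_add_eq_of_abs_lt (hh i hi)]
      simp [hi, mul_comm]
  rw [sum_congr rfl hterm, sum_add_distrib, sum_add_distrib, ← mul_sum, ← mul_sum,
    natCast_card_filter]

variable {a}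

lemma abs_sum_sign_sub_le_card_eq_of_forall_le {t : ℝ}
    (ht : ∀ s, ∑ i, |t - a i| ≤ ∑ i, |s - a i|) :
    |∑ i, (SignType.sign (t - a i) : ℝ)| ≤ #{i | a i = t} := by
  have hev : ∀ᶠ h in 𝓝 (0 : ℝ), ∀ i, a i ≠ t → |h| < |t - a i| := by
    refine eventually_all.2 fun i => ?_
    by_cases hi : a i = t
    · exact .of_forall fun _ h => absurd hi h
    · filter_upwards [eventually_abs_sub_lt 0 (abs_pos.2 (sub_ne_zero.2 (Ne.symm hi)))]
        with h hh _
      simpa using hh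
  obtain ⟨ε, hε, hsmall⟩ := Metric.eventually_nhds_iff.1 hev
  have hperturb : ∀ h, |h| < ε →
      0 ≤ h * ∑ i, (SignType.sign (t - a i) : ℝ) + |h| * #{i | a i = t} := fun h hh => by
    have := sum_abs_add_sub_eq a (hsmall (by simpa using hh))
    linarith [ht (t + h)]
  have hright := hperturb (ε / 2) (by rw [abs_of_pos (by linarith)]; linarith)
  have hleft := hperturb (-(ε / 2)) (by rw [abs_neg, abs_of_pos (by linarith)]; linarith)
  rw [abs_of_pos (by linarith)] at hright
  rw [abs_neg, abs_of_pos (by linarith)] at hleft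
  rw [abs_le]
  constructor <;> nlinarith

lemma exists_eq_and_sum_sign_sub_eq_zero_of_forall_le (hodd : Odd (Fintype.card ι))
    (ha : Function.Injective a) {t : ℝ} (ht : ∀ s, ∑ i, |t - a i| ≤ ∑ i, |s - a i|) :
    ∃ k, a k = t ∧ ∑ i, (SignType.sign (t - a i) : ℝ) = 0 := by
  have hle_one : #{i | a i = t} ≤ 1 :=
    card_le_one.2 fun i hi j hj => ha <| by simp only [mem_filter] at hi hj; rw [hi.2, hj.2]
  have hbound := abs_sum_sign_sub_le_card_eq_of_forall_le ht
  rw [sum_sign_sub_eq_card_sub_card, abs_le] at hbound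
  have hlt : #{i | a i < t} ≤ #{i | t < a i} + #{i | a i = t} := by
    exact_mod_cast (by linarith : (#{i | a i < t} : ℝ) ≤ #{i | t < a i} + #{i | a i = t})
  have hgt : #{i | t < a i} ≤ #{i | a i < t} + #{i | a i = t} := by
    exact_mod_cast (by linarith : (#{i | t < a i} : ℝ) ≤ #{i | a i < t} + #{i | a i = t})
  have htotal := card_lt_add_card_gt_add_card_eq a t
  obtain ⟨r, hr⟩ := hodd
  obtain ⟨k, hk⟩ := card_eq_one.1 (show #{i | a i = t} = 1 by omega)
  have hmem : k ∈ ({i | a i = t} : Finset ι) := by rw [hk]; exact mem_singleton_self k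
  refine ⟨k, (mem_filter.1 hmem).2, ?_⟩
  rw [sum_sign_sub_eq_card_sub_card, show #{i | a i < t} = #{i | t < a i} by omega, sub_self]

lemma sum_abs_sub_le_of_sum_sign_sub_eq_zero {t : ℝ}
    (h : ∑ i, (SignType.sign (t - a i) : ℝ) = 0) (s : ℝ) :
    ∑ i, |t - a i| ≤ ∑ i, |s - a i| :=
  calc ∑ i, |t - a i|
      = ∑ i, ((SignType.sign (t - a i) : ℝ) * (s - a i) - (s - t) * SignType.sign (t - a i)) :=
        sum_congr rfl fun i _ => by rw [← sign_mul_self]; ring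
    _ = ∑ i, (SignType.sign (t - a i) : ℝ) * (s - a i) := by
        rw [sum_sub_distrib, ← mul_sum, h, mul_zero, sub_zero]
    _ ≤ ∑ i, |s - a i| := sum_le_sum fun i _ => sign_mul_le_abs _ _

lemma iInf_sum_abs_sub_eq_of_sum_sign_sub_eq_zero {t : ℝ}
    (h : ∑ i, (SignType.sign (t - a i) : ℝ) = 0) :
    ⨅ s, ∑ i, |s - a i| = ∑ i, |t - a i| :=
  le_antisymm (ciInf_le ⟨0, by rintro _ ⟨s, rfl⟩; positivity⟩ t)
    (le_ciInf (sum_abs_sub_le_of_sum_sign_sub_eq_zero h))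

end SumAbsSub

lemma eventually_iInf_sum_abs_sub_eq {ι X : Type*} [Fintype ι] [TopologicalSpace X]
    {a : X → ι → ℝ} {p : X} (ha : ∀ i, ContinuousAt (fun q => a q i) p)
    (hinj : Function.Injective (a p)) {k : ι}
    (hk : ∑ i, (SignType.sign (a p k - a p i) : ℝ) = 0) :
    ∀ᶠ q in 𝓝 p, ⨅ s, ∑ i, |s - a q i| =
      ∑ i, (SignType.sign (a p k - a p i) : ℝ) * (a q k - a q i) := by
  have hsign :
      ∀ᶠ q in 𝓝 p, ∀ i, SignType.sign (a q k - a q i) = SignType.sign (a p k - a p i) := by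
    refine eventually_all.2 fun i => ?_
    rcases eq_or_ne i k with rfl | hi
    · simp
    · exact eventually_sign_eq_of_ne_zero ((ha k).sub (ha i)) (sub_ne_zero.2 (hinj.ne hi.symm))
  filter_upwards [hsign] with q hq
  rw [iInf_sum_abs_sub_eq_of_sum_sign_sub_eq_zero (t := a q k) (by simpa only [hq] using hk)]
  simp only [← hq, sign_mul_self]

theorem stmt_16 (N : ℕ) (hN : Odd N) (x y : Fin N → ℝ) (m : ℝ)
    (hdist : ∀ i j : Fin N, i ≠ j → y i - m * x i ≠ y j - m * x j)
    (tstar : ℝ)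
    (htstar : ∀ s : ℝ, ∑ i, |tstar - (y i - m * x i)| ≤ ∑ i, |s - (y i - m * x i)|) :
    HasDerivAt (fun m' : ℝ => ⨅ t : ℝ, ∑ i, |m' * x i + t - y i|)
      ((∑ i ∈ Finset.univ.filter (fun i => 0 < m * x i + tstar - y i), x i) -
       (∑ i ∈ Finset.univ.filter (fun i => m * x i + tstar - y i < 0), x i)) m := by
  set a : ℝ → Fin N → ℝ := fun m' i => y i - m' * x i
  have hinj : Function.Injective (a m) := fun i j hij => by_contra fun h => hdist i j h hij
  obtain ⟨k, rfl, hk⟩ :=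
    exists_eq_and_sum_sign_sub_eq_zero_of_forall_le (by simpa using hN) hinj htstar
  set σ : Fin N → ℝ := fun i => SignType.sign (a m k - a m i)
  have hlocal : (fun m' => ⨅ t, ∑ i, |m' * x i + t - y i|) =ᶠ[𝓝 m]
      fun m' => ∑ i, σ i * (a m' k - a m' i) := by
    filter_upwards [eventually_iInf_sum_abs_sub_eq (fun i => by fun_prop) hinj hk] with m' hm'
    rw [← hm']
    congr! 4 with t i
    simp only [a]
    ring
  have hline : ∀ i, HasDerivAt (fun m' => a m' k - a m' i) (x i - x k) m := fun i => by
    have haffine : (fun m' => a m' k - a m' i) = fun m' => m' * (x i - x k) + (y k - y i) := by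
      funext m'
      simp only [a]
      ring
    rw [haffine]
    exact (hasDerivAt_mul_const _).add_const _
  refine ((HasDerivAt.fun_sum fun i _ => (hline i).const_mul (σ i)).congr_of_eventuallyEq
    hlocal).congr_deriv ?_
  rw [sum_filter_pos_sub_sum_filter_neg]
  simp only [mul_sub, sum_sub_distrib, ← sum_mul, hk, zero_mul, sub_zero]
  refine sum_congr rfl fun i _ => ?_
  simp only [σ, a]
  ring_nf
end

section
/- A minimizer of the LAD line fitting problem passes through at least two data points: if the x_i are not all equal and N ≥ 2, then there exists a minimizer (m*, t*) of f(m,t) = Σ_i |m x_i + t - y_i| and indices i ≠ j with x_i ≠ x_j such that m* x_i + t* = y_i and m* x_j + t* = y_j. -/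
/-!
A line of bounded cost through two data points with distinct abscissae has bounded slope and
intercept, so the cost is coercive and a minimizer exists. Along a line `s ↦ (m, t) + s • (dm, dt)`
in parameter space the cost is `s ↦ ∑ |aᵢ + s bᵢ|`. If `s = 0` minimizes it, let `c = aₖ / bₖ`
minimize `|aᵢ / bᵢ|` over `bᵢ ≠ 0`: no residual changes sign for `|s| ≤ |c|`, so the cost is
affine there and the kink `s = -c` is a minimizer too. Translating a minimizing line vertically
to its first kink makes it pass through a data point; rotating it about that point to its first
kink makes it pass through a second one with a different abscissa.
-/

open Finset Set Filter

theorem abs_add_add_abs_sub_of_abs_le {r a : ℝ} (h : |a| ≤ |r|) :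
    |r + a| + |r - a| = 2 * |r| := by
  cases abs_cases r <;> cases abs_cases a <;> cases abs_cases (r + a) <;>
    cases abs_cases (r - a) <;> linarith

theorem exists_kink_sum_abs_eq_of_forall_le {ι : Type*} [Fintype ι] (a b : ι → ℝ)
    (hmin : ∀ s, ∑ i, |a i| ≤ ∑ i, |a i + s * b i|) (hb : ∃ k, b k ≠ 0) :
    ∃ s k, b k ≠ 0 ∧ a k + s * b k = 0 ∧ ∑ i, |a i + s * b i| = ∑ i, |a i| := by
  classical
  obtain ⟨k, hk, hkmin⟩ := (univ.filter (b · ≠ 0)).exists_min_image (fun i => |a i / b i|)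
    (by simpa [Finset.Nonempty] using hb)
  have hbk : b k ≠ 0 := (mem_filter.mp hk).2
  set c := a k / b k
  have hstep : ∀ i, |c * b i| ≤ |a i| := by
    intro i
    by_cases hbi : b i = 0
    · simp [hbi]
    · calc |c * b i| ≤ |a i / b i| * |b i| :=
            abs_mul c (b i) ▸ mul_le_mul_of_nonneg_right (hkmin i (by simp [hbi])) (abs_nonneg _)
        _ = |a i| := by rw [abs_div, div_mul_cancel₀ _ (abs_ne_zero.mpr hbi)]
  have hsym : ∑ i, |a i + -c * b i| + ∑ i, |a i + c * b i| = 2 * ∑ i, |a i| := by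
    rw [← sum_add_distrib, mul_sum]
    refine sum_congr rfl fun i _ => ?_
    rw [add_comm, neg_mul, ← sub_eq_add_neg]
    exact abs_add_add_abs_sub_of_abs_le (hstep i)
  refine ⟨-c, k, hbk, by rw [neg_mul, div_mul_cancel₀ _ hbk, add_neg_cancel], ?_⟩
  linarith [hmin c, hmin (-c)]

section LAD

variable {ι : Type*} [Fintype ι] (x y : ι → ℝ)

def ladCost (m t : ℝ) : ℝ := ∑ i, |m * x i + t - y i|

def IsLADMinimizer (m t : ℝ) : Prop := ∀ m' t', ladCost x y m t ≤ ladCost x y m' t'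

theorem continuous_ladCost : Continuous fun p : ℝ × ℝ => ladCost x y p.1 p.2 := by
  unfold ladCost; fun_prop

theorem abs_residual_le_ladCost (m t : ℝ) (i : ι) : |m * x i + t - y i| ≤ ladCost x y m t :=
  single_le_sum (f := fun i => |m * x i + t - y i|) (fun _ _ => abs_nonneg _) (mem_univ i)

variable {x y}

theorem abs_mul_abs_sub_le_of_ladCost_le {m t C : ℝ} (h : ladCost x y m t ≤ C) (i j : ι) :
    |m| * |x i - x j| ≤ 2 * C + |y i - y j| := by
  calc |m| * |x i - x j|
      = |(m * x i + t - y i) - (m * x j + t - y j) + (y i - y j)| := by rw [← abs_mul]; ring_nf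
    _ ≤ |m * x i + t - y i| + |m * x j + t - y j| + |y i - y j| := by
      linarith [abs_add_le ((m * x i + t - y i) - (m * x j + t - y j)) (y i - y j),
        abs_sub (m * x i + t - y i) (m * x j + t - y j)]
    _ ≤ 2 * C + |y i - y j| := by
      linarith [abs_residual_le_ladCost x y m t i, abs_residual_le_ladCost x y m t j]

theorem abs_le_of_ladCost_le {m t C : ℝ} (h : ladCost x y m t ≤ C) (i : ι) :
    |t| ≤ C + |m| * |x i| + |y i| := by
  calc |t| = |(m * x i + t - y i) - m * x i + y i| := by ring_nf
    _ ≤ |m * x i + t - y i| + |m| * |x i| + |y i| := by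
      rw [← abs_mul]
      linarith [abs_add_le ((m * x i + t - y i) - m * x i) (y i),
        abs_sub (m * x i + t - y i) (m * x i)]
    _ ≤ C + |m| * |x i| + |y i| := by linarith [abs_residual_le_ladCost x y m t i]

theorem exists_isLADMinimizer (hx : ∃ i j, x i ≠ x j) : ∃ m t, IsLADMinimizer x y m t := by
  obtain ⟨i, j, hij⟩ := hx
  set C := ladCost x y 0 0
  set R := (2 * C + |y i - y j|) / |x i - x j|
  set R' := C + R * |x i| + |y i|
  have hsub : ∀ p : ℝ × ℝ, ladCost x y p.1 p.2 ≤ C → p ∈ Icc (-R) R ×ˢ Icc (-R') R' := by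
    intro p hp
    have hm : |p.1| ≤ R := (le_div_iff₀ (abs_pos.mpr (sub_ne_zero.mpr hij))).mpr
      (abs_mul_abs_sub_le_of_ladCost_le hp i j)
    have ht : |p.2| ≤ R' := (abs_le_of_ladCost_le hp i).trans <| by
      linarith [mul_le_mul_of_nonneg_right hm (abs_nonneg (x i))]
    exact ⟨abs_le.mp hm, abs_le.mp ht⟩
  obtain ⟨p, hp⟩ := (continuous_ladCost x y).exists_forall_le' (0, 0) <|
    eventually_of_mem (isCompact_Icc.prod isCompact_Icc).compl_mem_cocompact fun q hq =>
      le_of_not_ge fun hq' => hq (hsub q hq')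
  exact ⟨p.1, p.2, fun m t => hp (m, t)⟩

theorem IsLADMinimizer.exists_along_through {m t : ℝ} (h : IsLADMinimizer x y m t) (dm dt : ℝ)
    (hd : ∃ k, dm * x k + dt ≠ 0) :
    ∃ s k, dm * x k + dt ≠ 0 ∧ IsLADMinimizer x y (m + s * dm) (t + s * dt) ∧
      (m + s * dm) * x k + (t + s * dt) = y k := by
  have hcost : ∀ s, ladCost x y (m + s * dm) (t + s * dt) =
      ∑ i, |(m * x i + t - y i) + s * (dm * x i + dt)| :=
    fun s => sum_congr rfl fun i _ => by ring_nf
  obtain ⟨s, k, hk, hroot, heq⟩ := exists_kink_sum_abs_eq_of_forall_le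
    (fun i => m * x i + t - y i) (fun i => dm * x i + dt)
    (fun s => (h _ _).trans_eq (hcost s)) hd
  refine ⟨s, k, hk, fun m' t' => ?_, by linear_combination hroot⟩
  rw [hcost, heq]
  exact h m' t'

end LAD

theorem stmt_17_general (N : ℕ) (x y : Fin N → ℝ)
    (hx : ∃ i j : Fin N, x i ≠ x j) :
    ∃ m t : ℝ,
      (∀ m' t' : ℝ, ∑ i, |m * x i + t - y i| ≤ ∑ i, |m' * x i + t' - y i|) ∧
      ∃ i j : Fin N, i ≠ j ∧ x i ≠ x j ∧
        m * x i + t = y i ∧ m * x j + t = y j := by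
  obtain ⟨m, t, hmin⟩ := exists_isLADMinimizer (y := y) hx
  obtain ⟨i, j, hij⟩ := hx
  obtain ⟨s, i₀, -, hmin₁, hi₀⟩ := hmin.exists_along_through 0 1 ⟨i, by simp⟩
  have hoff : ∃ k, 1 * x k + -x i₀ ≠ 0 := by
    by_contra! h
    exact hij (by linarith [h i, h j])
  obtain ⟨s', k, hk, hmin₂, hk'⟩ := hmin₁.exists_along_through 1 (-x i₀) hoff
  have hxk : x i₀ ≠ x k := fun h' => hk (by rw [← h']; ring)
  exact ⟨_, _, hmin₂, i₀, k, ne_of_apply_ne x hxk, hxk, by linear_combination hi₀, hk'⟩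

theorem stmt_17 (N : ℕ) (hN : 2 ≤ N) (x y : Fin N → ℝ)
    (hx : ∃ i j : Fin N, x i ≠ x j) :
    ∃ m t : ℝ,
      (∀ m' t' : ℝ, ∑ i, |m * x i + t - y i| ≤ ∑ i, |m' * x i + t' - y i|) ∧
      ∃ i j : Fin N, i ≠ j ∧ x i ≠ x j ∧
        m * x i + t = y i ∧ m * x j + t = y j :=
  stmt_17_general N x y hx
end
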